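/- Let G be a perfect graph on vertex set {1,…,n} and let Ḡ be its complement graph. Then the polar dual H(G)° = { y ∈ ℝ^{n+1} : ⟨y,x⟩ ≤ 1 for all x ∈ H(G) } of the Hansen polytope H(G) is affinely equivalent to the Hansen polytope H(Ḡ): there is an affine automorphism of ℝ^{n+1} mapping H(Ḡ) onto H(G)°. -/

import Mathlib

/-- A finset of vertices is stable (independent) in `G` if no two of its elements are adjacent. -/
def IsStable {n : ℕ} (G : SimpleGraph (Fin n)) (I : Finset (Fin n)) : Prop :=
  ∀ ⦃a⦄, a ∈ I → ∀ ⦃b⦄, b ∈ I → ¬ G.Adj a b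

/-- The point `e_0 + ∑_{i ∈ I} e_i ∈ ℝ^{n+1}`. -/
def hansenVert {n : ℕ} (I : Finset (Fin n)) : Fin (n + 1) → ℝ :=
  fun j => Fin.cases 1 (fun i => if i ∈ I then 1 else 0) j

/-- The Hansen polytope of `G`. -/
def hansenPolytope {n : ℕ} (G : SimpleGraph (Fin n)) : Set (Fin (n + 1) → ℝ) :=
  convexHull ℝ
    {x | ∃ I : Finset (Fin n), IsStable G I ∧ (x = hansenVert I ∨ x = -hansenVert I)}

/-- The polar dual `P° = { y : ⟨y,x⟩ ≤ 1 for all x ∈ P }`. -/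
def polarDual {d : ℕ} (P : Set (Fin d → ℝ)) : Set (Fin d → ℝ) :=
  {y | ∀ x ∈ P, ∑ i, y i * x i ≤ 1}

/-- The clique number of a graph, as an element of `ℕ∞`. -/
noncomputable def cliqueNumber {V : Type*} (G : SimpleGraph V) : ℕ∞ :=
  ⨆ t ∈ {t : Finset V | G.IsClique (↑t : Set V)}, (t.card : ℕ∞)

/-- A graph is perfect if for every induced subgraph the clique number equals
the chromatic number. -/
def IsPerfect {V : Type*} (G : SimpleGraph V) : Prop :=
  ∀ s : Set V, cliqueNumber (G.induce s) = (G.induce s).chromaticNumber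

/-!
Let `D = diag(-1, 2, …, 2)`. For a clique `K` and a stable set `I` of `G`, the pairing of
`D (1, 1_K)` with `(1, 1_I)` is `-1 + 2 |K ∩ I| ∈ {-1, 1}`, so `D` maps `H(Ḡ)` into `H(G)°`.
Conversely, `y = (y₀, w)` lies in `H(G)°` iff `|y₀ + w(I)| ≤ 1` for every stable set `I`. Then
`w⁺ / (1 - y₀)` and `w⁻ / (1 + y₀)` are fractional cliques of `G`, and for perfect `G` every
fractional clique is a convex combination of cliques (`QSTAB(Ḡ) = STAB(Ḡ)`); this writes `D⁻¹ y`
as a convex combination of points `(1, a)` and `-(1, b)` of `H(Ḡ)`.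

`QSTAB(Ḡ) ⊆ STAB(Ḡ)` is proved by separation. For a fractional clique `x` and integer weights
`c ≥ 0`, replace every vertex `i` by a clique of `c i` clones: by Lovász's replication lemma the
blow-up is again colourable with as many colours as its clique number, and each colour class
projects to a stable set of `G`, so `c ⬝ x` is at most the largest `c`-weight of a clique. Real
weights follow by rounding.
-/

open Finset

theorem Finset.sum_posPart_eq_sum_filter {ι R : Type*} [AddCommGroup R] [LinearOrder R]
    [IsOrderedAddMonoid R] (s : Finset ι) (c : ι → R) :
    ∑ i ∈ s, (c i)⁺ = ∑ i ∈ s with 0 < c i, c i := by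
  rw [sum_filter]
  exact sum_congr rfl fun i _ => posPart_eq_ite_lt

namespace SimpleGraph

section ColorableOn

variable {α : Type*} (H : SimpleGraph α)

open Classical in
noncomputable def cliqueNumOn (T : Finset α) : ℕ :=
  (T.powerset.filter fun C : Finset α => H.IsClique (C : Set α)).sup card

def ColorableOn (T : Finset α) (m : ℕ) : Prop :=
  ∃ f : α → ℕ, (∀ a ∈ T, f a < m) ∧ ∀ a ∈ T, ∀ b ∈ T, H.Adj a b → f a ≠ f b

variable {H}

theorem IsClique.card_le_cliqueNumOn {C T : Finset α} (hC : H.IsClique (C : Set α))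
    (hCT : C ⊆ T) : #C ≤ H.cliqueNumOn T := by
  classical
  exact le_sup (f := card) (mem_filter.2 ⟨mem_powerset.2 hCT, hC⟩)

theorem cliqueNumOn_le {T : Finset α} {m : ℕ}
    (h : ∀ C ⊆ T, H.IsClique (C : Set α) → #C ≤ m) : H.cliqueNumOn T ≤ m := by
  classical
  exact Finset.sup_le fun C hC => h C (mem_powerset.1 (mem_filter.1 hC).1) (mem_filter.1 hC).2

theorem cliqueNumOn_mono {T T' : Finset α} (h : T ⊆ T') : H.cliqueNumOn T ≤ H.cliqueNumOn T' :=
  cliqueNumOn_le fun _ hC hcl => hcl.card_le_cliqueNumOn (hC.trans h)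

theorem exists_isClique_card_eq_cliqueNumOn (T : Finset α) :
    ∃ C ⊆ T, H.IsClique (C : Set α) ∧ #C = H.cliqueNumOn T := by
  classical
  have hne : (T.powerset.filter fun C : Finset α => H.IsClique (C : Set α)).Nonempty :=
    ⟨∅, by simp⟩
  obtain ⟨C, hC, hsup⟩ := exists_mem_eq_sup _ hne card
  exact ⟨C, mem_powerset.1 (mem_filter.1 hC).1, (mem_filter.1 hC).2, hsup.symm⟩

theorem ColorableOn.mono {T : Finset α} {m m' : ℕ} (h : H.ColorableOn T m) (hm : m ≤ m') :
    H.ColorableOn T m' :=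
  let ⟨f, hlt, hf⟩ := h
  ⟨f, fun a ha => (hlt a ha).trans_le hm, hf⟩

theorem _root_.IsPerfect.colorableOn (hH : IsPerfect H) (S : Finset α) :
    H.ColorableOn S (H.cliqueNumOn S) := by
  classical
  have hle : cliqueNumber (H.induce (S : Set α)) ≤ H.cliqueNumOn S := by
    refine iSup₂_le fun t ht => ?_
    have hclique : H.IsClique (t.map (Function.Embedding.subtype _) : Set α) := by
      rintro _ ha' _ hb' hab
      obtain ⟨a, ha, rfl⟩ := mem_map.1 ha'
      obtain ⟨b, hb, rfl⟩ := mem_map.1 hb'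
      exact ht ha hb (fun h => hab (congrArg _ h))
    have := hclique.card_le_cliqueNumOn fun a ha => by
      obtain ⟨b, -, rfl⟩ := mem_map.1 ha
      exact b.2
    exact_mod_cast (card_map _ ▸ this)
  obtain ⟨c⟩ := (chromaticNumber_le_iff_colorable).1 (hH S ▸ hle)
  refine ⟨fun a => if h : a ∈ S then c ⟨a, h⟩ else 0, fun a ha => by simp [ha],
    fun a ha b hb hab => ?_⟩
  simpa [ha, hb, Fin.val_inj] using
    c.valid (show (H.induce (S : Set α)).Adj ⟨a, ha⟩ ⟨b, hb⟩ from hab)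

theorem IsClique.surjOn_of_card_eq {T C : Finset α} {m : ℕ} {f : α → ℕ}
    (hflt : ∀ a ∈ T, f a < m) (hf : ∀ a ∈ T, ∀ b ∈ T, H.Adj a b → f a ≠ f b)
    (hC : H.IsClique (C : Set α)) (hCT : C ⊆ T) (hcard : #C = m) :
    Set.SurjOn f C (Set.Iio m) := by
  classical
  have hinj : Set.InjOn f C := fun a ha b hb hab => by
    by_contra hne
    exact hf a (hCT ha) b (hCT hb) (hC ha hb hne) hab
  have himage : C.image f = range m :=
    eq_of_subset_of_card_le (fun j hj => by
        obtain ⟨a, ha, rfl⟩ := mem_image.1 hj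
        exact mem_range.2 (hflt a (hCT ha)))
      (by rw [card_image_of_injOn hinj, hcard, card_range])
  intro j hj
  simpa [← coe_image, himage] using hj

variable [DecidableEq α]

theorem ColorableOn.union_of_isIndepSet {S A : Finset α} {m : ℕ}
    (h : H.ColorableOn S m) (hA : H.IsIndepSet (A : Set α)) : H.ColorableOn (S ∪ A) (m + 1) := by
  obtain ⟨f, hlt, hf⟩ := h
  refine ⟨fun a => if a ∈ S then f a else m, fun a _ => ?_, fun a ha b hb hab => ?_⟩
  · dsimp only
    split_ifs with haS
    exacts [(hlt a haS).trans (Nat.lt_succ_self m), Nat.lt_succ_self m]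
  · by_cases haS : a ∈ S <;> by_cases hbS : b ∈ S <;> simp only [haS, hbS, if_true, if_false]
    · exact hf a haS b hbS hab
    · exact (hlt a haS).ne
    · exact (hlt b hbS).ne'
    · exact absurd hab
        (hA (by simpa [haS] using ha) (by simpa [hbS] using hb) (H.ne_of_adj hab))

theorem ColorableOn.of_twins {T : Finset α} {v v' : α} (hv : v ∈ T) (hv' : v' ∈ T)
    (hvv' : v ≠ v') (hadj : H.Adj v v')
    (htwin : ∀ p, p ≠ v → p ≠ v' → (H.Adj v' p ↔ H.Adj v p))
    (hsub : ∀ S ⊆ T.erase v', H.ColorableOn S (H.cliqueNumOn S)) :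
    H.ColorableOn T (H.cliqueNumOn T) := by
  set T' := T.erase v'
  have hvT' : v ∈ T' := mem_erase.2 ⟨hvv', hv⟩
  obtain ⟨f, hflt, hf⟩ := hsub T' subset_rfl
  by_cases hmax : ∃ C ⊆ T', H.IsClique (C : Set α) ∧ #C = H.cliqueNumOn T' ∧ v ∈ C
  · -- `v'` enlarges a maximum clique of `T'`, so it may take a fresh colour
    obtain ⟨C, hCT', hC, hcard, hvC⟩ := hmax
    have hv'C : v' ∉ C := fun h => (mem_erase.1 (hCT' h)).1 rfl
    have hC' : H.IsClique ((insert v' C : Finset α) : Set α) := by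
      refine coe_insert v' C ▸ isClique_insert.2 ⟨hC, fun p hp hp' => ?_⟩
      obtain rfl | hpv := eq_or_ne p v
      · exact hadj.symm
      · exact (htwin p hpv hp'.symm).2 (hC hvC hp hpv.symm)
    have hlt : H.cliqueNumOn T' + 1 ≤ H.cliqueNumOn T := by
      have := hC'.card_le_cliqueNumOn (insert_subset hv' (hCT'.trans (erase_subset _ _)))
      rwa [card_insert_of_notMem hv'C, hcard] at this
    have hT : T' ∪ {v'} = T := by rw [union_comm, ← insert_eq, insert_erase hv']
    rw [← hT]
    exact (ColorableOn.union_of_isIndepSet ⟨f, hflt, hf⟩ (by simp)).mono (hT ▸ hlt)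
  · -- the other vertices of `v`'s colour join `v'` in a new colour class, and the rest `T''`
    -- has a smaller clique number
    push Not at hmax
    set A := T'.filter fun p => f p = f v ∧ p ≠ v
    have hAT' : A ⊆ T' := filter_subset _ _
    set T'' := T' \ A
    have hA : H.IsIndepSet ((insert v' A : Finset α) : Set α) := by
      have hAA : H.IsIndepSet (A : Set α) := fun p hp q hq _ hpq => by
        obtain ⟨hpT', hfp, -⟩ := mem_filter.1 hp
        obtain ⟨hqT', hfq, -⟩ := mem_filter.1 hq
        exact hf p hpT' q hqT' hpq (hfp.trans hfq.symm)
      refine coe_insert v' A ▸ hAA.insert fun p hp _ => ?_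
      obtain ⟨hpT', hfp, hpv⟩ := mem_filter.1 hp
      have hnadj : ¬H.Adj v' p := fun hadj' =>
        hf v hvT' p hpT' ((htwin p hpv (mem_erase.1 hpT').1).1 hadj') hfp.symm
      exact ⟨hnadj, fun h => hnadj h.symm⟩
    have hlt : H.cliqueNumOn T'' + 1 ≤ H.cliqueNumOn T := by
      refine le_trans ?_ (cliqueNumOn_mono (erase_subset v' T))
      obtain ⟨C, hCT'', hC, hcard⟩ := exists_isClique_card_eq_cliqueNumOn (H := H) T''
      have hCT' : C ⊆ T' := hCT''.trans sdiff_subset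
      rw [← hcard]
      refine lt_of_le_of_ne (hC.card_le_cliqueNumOn hCT') fun heq => ?_
      -- a maximum clique of `T'` sees every colour, but `T''` lacks the colour of `v`
      obtain ⟨p, hpC, hfp⟩ := hC.surjOn_of_card_eq hflt hf hCT' heq (hflt v hvT')
      have hpv : p ≠ v := fun h => hmax C hCT' hC heq (h ▸ hpC)
      exact (mem_sdiff.1 (hCT'' hpC)).2 (mem_filter.2 ⟨hCT' hpC, hfp, hpv⟩)
    have hT : T'' ∪ insert v' A = T := by
      rw [union_insert, sdiff_union_of_subset hAT', insert_erase hv']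
    rw [← hT]
    exact ((hsub T'' sdiff_subset).union_of_isIndepSet hA).mono (hT ▸ hlt)

end ColorableOn

section Blowup

variable {α β : Type*}

/-- `G` with every vertex `a` replaced by a clique on the fibre `φ ⁻¹' {a}`. -/
def blowup (G : SimpleGraph α) (φ : β → α) : SimpleGraph β :=
  G.comap φ ⊔ fromRel fun p q => φ p = φ q

variable {G : SimpleGraph α} {φ : β → α}

theorem blowup_adj {p q : β} :
    (G.blowup φ).Adj p q ↔ G.Adj (φ p) (φ q) ∨ p ≠ q ∧ φ p = φ q := by
  simp [blowup, eq_comm]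

theorem cliqueNumOn_image_le_cliqueNumOn_blowup [DecidableEq α] (T : Finset β) :
    G.cliqueNumOn (T.image φ) ≤ (G.blowup φ).cliqueNumOn T := by
  refine cliqueNumOn_le fun C hCT hC => ?_
  set C' := T.filter fun p => φ p ∈ C
  have hC' : (G.blowup φ).IsClique (C' : Set β) := fun p hp q hq hpq => by
    simp only [C', mem_coe, mem_filter] at hp hq
    by_cases hφ : φ p = φ q
    · exact blowup_adj.2 (Or.inr ⟨hpq, hφ⟩)
    · exact blowup_adj.2 (Or.inl (hC hp.2 hq.2 hφ))
  have hCC' : C ⊆ C'.image φ := fun i hi => by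
    obtain ⟨p, hp, rfl⟩ := mem_image.1 (hCT hi)
    exact mem_image.2 ⟨p, mem_filter.2 ⟨hp, hi⟩, rfl⟩
  exact (card_le_card hCC').trans
    (card_image_le.trans (hC'.card_le_cliqueNumOn (filter_subset _ _)))

theorem colorableOn_blowup_of_injOn [DecidableEq α]
    (hG : ∀ S : Finset α, G.ColorableOn S (G.cliqueNumOn S)) {T : Finset β}
    (hT : Set.InjOn φ T) : (G.blowup φ).ColorableOn T ((G.blowup φ).cliqueNumOn T) := by
  obtain ⟨f, hflt, hf⟩ := hG (T.image φ)
  refine ColorableOn.mono ⟨f ∘ φ, fun p hp => hflt _ (mem_image_of_mem φ hp),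
    fun p hp q hq hpq => ?_⟩ (cliqueNumOn_image_le_cliqueNumOn_blowup T)
  rcases blowup_adj.1 hpq with hadj | ⟨hne, hφ⟩
  · exact hf _ (mem_image_of_mem φ hp) _ (mem_image_of_mem φ hq) hadj
  · exact absurd (hT hp hq hφ) hne

/-- Lovász's replication lemma. -/
theorem colorableOn_blowup (hG : ∀ S : Finset α, G.ColorableOn S (G.cliqueNumOn S))
    (T : Finset β) : (G.blowup φ).ColorableOn T ((G.blowup φ).cliqueNumOn T) := by
  classical
  induction T using Finset.strongInduction with
  | H T ih =>
    by_cases hT : Set.InjOn φ T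
    · exact colorableOn_blowup_of_injOn hG hT
    obtain ⟨p, hp, q, hq, hφ, hpq⟩ : ∃ p ∈ T, ∃ q ∈ T, φ p = φ q ∧ p ≠ q := by
      simpa [Set.InjOn] using hT
    refine ColorableOn.of_twins hp hq hpq (blowup_adj.2 (Or.inr ⟨hpq, hφ⟩))
      (fun r hrp hrq => ?_) fun S hS => ih S (hS.trans_ssubset (erase_ssubset hq))
    simp only [blowup_adj, hφ, Ne.symm hrp, Ne.symm hrq, ne_eq, not_false_eq_true, true_and]

end Blowup

section FractionalClique

variable {V : Type*} {G : SimpleGraph V} {x : V → ℝ}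

def IsFractionalClique (G : SimpleGraph V) (x : V → ℝ) : Prop :=
  0 ≤ x ∧ ∀ S : Finset V, G.IsIndepSet (S : Set V) → ∑ i ∈ S, x i ≤ 1

def cliquePolytope (G : SimpleGraph V) : Set (V → ℝ) :=
  convexHull ℝ ((fun K : Finset V => (K : Set V).indicator 1) '' {K | G.IsClique (K : Set V)})

theorem zero_mem_cliquePolytope : (0 : V → ℝ) ∈ G.cliquePolytope :=
  subset_convexHull ℝ _ ⟨∅, by simp, by simp [Pi.zero_def]⟩

theorem IsIndepSet.sum_posPart_le {S : Finset V} (hS : G.IsIndepSet (S : Set V)) {w : V → ℝ}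
    {r : ℝ} (h : ∀ S : Finset V, G.IsIndepSet (S : Set V) → ∑ i ∈ S, w i ≤ r) :
    ∑ i ∈ S, w⁺ i ≤ r := by
  simpa [sum_posPart_eq_sum_filter] using
    h _ (Set.Pairwise.mono (coe_subset.2 (filter_subset _ _)) hS)

theorem IsIndepSet.card_inter_le_one [DecidableEq V] {I K : Finset V}
    (hI : G.IsIndepSet (I : Set V)) (hK : G.IsClique (K : Set V)) :
    #(I ∩ K) ≤ 1 :=
  card_le_one.2 fun a ha b hb => by
    rw [mem_inter] at ha hb
    by_contra hab
    exact hI ha.1 hb.1 hab (hK ha.2 hb.2 hab)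

variable [Fintype V]

theorem IsFractionalClique.sum_natCast_mul_le
    (hG : ∀ S : Finset V, G.ColorableOn S (G.cliqueNumOn S)) (hx : G.IsFractionalClique x)
    (c : V → ℕ) {t : ℝ} (ht : ∀ K : Finset V, G.IsClique (K : Set V) → ∑ i ∈ K, (c i : ℝ) ≤ t) :
    ∑ i, (c i : ℝ) * x i ≤ t := by
  classical
  set B := G.blowup (Sigma.fst : (Σ i, Fin (c i)) → V)
  set m := B.cliqueNumOn univ
  obtain ⟨f, hflt, hf⟩ := colorableOn_blowup hG (univ : Finset (Σ i, Fin (c i)))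
  have hclass : ∀ j, ∑ p ∈ univ.filter (f · = j), x p.1 ≤ 1 := by
    intro j
    set F := univ.filter (f · = j)
    have hF : ∀ p ∈ F, ∀ q ∈ F, ¬B.Adj p q := fun p hp q hq hpq =>
      hf p (mem_univ p) q (mem_univ q) hpq ((mem_filter.1 hp).2.trans (mem_filter.1 hq).2.symm)
    have hinj : Set.InjOn Sigma.fst (F : Set (Σ i, Fin (c i))) := fun p hp q hq hpq => by
      by_contra hne
      exact hF p hp q hq (blowup_adj.2 (Or.inr ⟨hne, hpq⟩))
    rw [← sum_image hinj]
    refine hx.2 _ fun i hi k hk hik hadj => ?_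
    obtain ⟨p, hp, rfl⟩ := mem_image.1 hi
    obtain ⟨q, hq, rfl⟩ := mem_image.1 hk
    exact hF p hp q hq (blowup_adj.2 (Or.inl hadj))
  have hm : (m : ℝ) ≤ t := by
    obtain ⟨C, -, hC, hcard⟩ := exists_isClique_card_eq_cliqueNumOn (H := B) univ
    have hK : G.IsClique (C.image Sigma.fst : Set V) := by
      rw [coe_image]
      rintro _ ⟨p, hp, rfl⟩ _ ⟨q, hq, rfl⟩ hpq
      exact (blowup_adj.1 (hC hp hq fun h => hpq (h ▸ rfl))).resolve_right fun h => hpq h.2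
    have hCK : #C ≤ ∑ i ∈ C.image Sigma.fst, c i := by
      calc #C ≤ #((C.image Sigma.fst).sigma fun _ => univ) :=
            card_le_card fun p hp => mem_sigma.2 ⟨mem_image_of_mem _ hp, mem_univ _⟩
        _ = ∑ i ∈ C.image Sigma.fst, c i := by simp [card_sigma]
    rw [show m = #C from hcard.symm]
    exact le_trans (by exact_mod_cast hCK) (ht _ hK)
  calc ∑ i, (c i : ℝ) * x i = ∑ p : Σ i, Fin (c i), x p.1 := by
        simp [Fintype.sum_sigma]
    _ = ∑ j ∈ range m, ∑ p ∈ univ.filter (f · = j), x p.1 :=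
        (sum_fiberwise_of_maps_to (fun p _ => mem_range.2 (hflt p (mem_univ p))) _).symm
    _ ≤ ∑ _j ∈ range m, (1 : ℝ) := sum_le_sum fun j _ => hclass j
    _ ≤ t := by simpa using hm

open Filter Topology in
theorem IsFractionalClique.sum_mul_le
    (hG : ∀ S : Finset V, G.ColorableOn S (G.cliqueNumOn S)) (hx : G.IsFractionalClique x)
    {c : V → ℝ} (hc : 0 ≤ c) {t : ℝ}
    (ht : ∀ K : Finset V, G.IsClique (K : Set V) → ∑ i ∈ K, c i ≤ t) :
    ∑ i, c i * x i ≤ t := by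
  -- round the weights `N • c` up to natural numbers and let `N → ∞`
  have hN : ∀ N : ℕ, 0 < N → ∑ i, c i * x i ≤ t + Fintype.card V / N := by
    intro N hN
    have hN' : (0 : ℝ) < N := Nat.cast_pos.2 hN
    have hnat := hx.sum_natCast_mul_le hG (fun i => ⌈N * c i⌉₊) (t := N * t + Fintype.card V)
      fun K hK => calc
        ∑ i ∈ K, (⌈N * c i⌉₊ : ℝ) ≤ ∑ i ∈ K, (N * c i + 1) :=
          sum_le_sum fun i _ => (Nat.ceil_lt_add_one (mul_nonneg hN'.le (hc i))).le
        _ = N * ∑ i ∈ K, c i + #K := by simp [sum_add_distrib, mul_sum]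
        _ ≤ N * t + Fintype.card V :=
          add_le_add (mul_le_mul_of_nonneg_left (ht K hK) hN'.le)
            (by exact_mod_cast card_le_univ K)
    have hround : N * ∑ i, c i * x i ≤ ∑ i, (⌈N * c i⌉₊ : ℝ) * x i := by
      rw [mul_sum]
      exact sum_le_sum fun i _ => by
        rw [← mul_assoc]
        exact mul_le_mul_of_nonneg_right (Nat.le_ceil _) (hx.1 i)
    calc ∑ i, c i * x i = N * (∑ i, c i * x i) / N := by field_simp
      _ ≤ (N * t + Fintype.card V) / N := by gcongr; exact hround.trans hnat
      _ = t + Fintype.card V / N := by field_simp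
  have hlim : Tendsto (fun N : ℕ => t + Fintype.card V / (N : ℝ)) atTop (𝓝 t) := by
    simpa using
      tendsto_const_nhds.add (tendsto_const_div_atTop_nhds_zero_nat (Fintype.card V : ℝ))
  exact ge_of_tendsto hlim (eventually_atTop.2 ⟨1, fun N hN1 => hN N hN1⟩)

theorem sum_mul_indicator_one (c : V → ℝ) (K : Finset V) :
    ∑ i, c i * (K : Set V).indicator 1 i = ∑ i ∈ K, c i := by
  classical
  simp [Set.indicator_apply, sum_ite_mem]

theorem IsFractionalClique.mem_cliquePolytope
    (hG : ∀ S : Finset V, G.ColorableOn S (G.cliqueNumOn S)) (hx : G.IsFractionalClique x) :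
    x ∈ G.cliquePolytope := by
  classical
  set P := (fun K : Finset V => (K : Set V).indicator (1 : V → ℝ)) ''
    {K | G.IsClique (K : Set V)}
  have hP : P.Finite := Set.toFinite P
  rw [cliquePolytope, ← iInter_halfSpaces_eq (convex_convexHull ℝ P)
    (hP.isClosed_convexHull (𝕜 := ℝ)), Set.mem_iInter]
  intro l
  obtain ⟨y, hyP, hmax⟩ := Set.exists_max_image P l hP ⟨_, ∅, by simp, rfl⟩
  refine ⟨y, subset_convexHull ℝ P hyP, ?_⟩
  set c : V → ℝ := fun i => l fun j => if i = j then 1 else 0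
  have hl : ∀ z, l z = ∑ i, c i * z i := fun z => by
    rw [← ContinuousLinearMap.coe_coe, LinearMap.pi_apply_eq_sum_univ]
    simp [c, mul_comm]
  rw [hl x]
  -- `l x ≤ ∑ cᵢ⁺ xᵢ`, and `∑_{i ∈ K} cᵢ⁺` is the value of `l` at the clique `K ∩ {c > 0}`
  refine (sum_le_sum fun i _ => mul_le_mul_of_nonneg_right (le_posPart (c i)) (hx.1 i)).trans
    (hx.sum_mul_le hG (fun i => posPart_nonneg (c i)) fun K hK => ?_)
  have hK' : G.IsClique ((K.filter (0 < c ·) : Finset V) : Set V) :=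
    hK.subset (coe_subset.2 (filter_subset _ _))
  have := hmax _ ⟨_, hK', rfl⟩
  rwa [hl, sum_mul_indicator_one, ← sum_posPart_eq_sum_filter] at this

theorem exists_eq_smul_mem_cliquePolytope
    (hG : ∀ S : Finset V, G.ColorableOn S (G.cliqueNumOn S)) {u : V → ℝ} (hu : 0 ≤ u) {r : ℝ}
    (hS : ∀ S : Finset V, G.IsIndepSet (S : Set V) → ∑ i ∈ S, u i ≤ r) :
    ∃ a ∈ G.cliquePolytope, u = r • a := by
  obtain hr | hr := (show 0 ≤ r by simpa using hS ∅ (by simp)).eq_or_lt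
  · refine ⟨0, zero_mem_cliquePolytope, funext fun i => le_antisymm ?_ (by simpa using hu i)⟩
    simpa [← hr] using hS {i} (by simp)
  · refine ⟨r⁻¹ • u, IsFractionalClique.mem_cliquePolytope hG
      ⟨smul_nonneg (inv_nonneg.2 hr.le) hu, fun S hS' => ?_⟩, by rw [smul_inv_smul₀ hr.ne']⟩
    simpa [← mul_sum, inv_mul_le_iff₀ hr] using hS S hS'

end FractionalClique

end SimpleGraph

theorem polarDual_convexHull {d : ℕ} (P : Set (Fin d → ℝ)) :
    polarDual (convexHull ℝ P) = polarDual P := by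
  refine Set.Subset.antisymm (fun y hy x hx => hy x (subset_convexHull ℝ P hx)) fun y hy =>
    convexHull_min hy ?_
  exact convex_halfSpace_le ⟨fun u v => dotProduct_add y u v, fun c u => dotProduct_smul c y u⟩ 1

theorem convex_polarDual {d : ℕ} (P : Set (Fin d → ℝ)) : Convex ℝ (polarDual P) := by
  simp only [polarDual, Set.ofPred_forall]
  exact convex_iInter₂ fun x _ =>
    convex_halfSpace_le ⟨fun u v => add_dotProduct u v x, fun c u => smul_dotProduct c u x⟩ 1

section Hansen

variable {n : ℕ} {G : SimpleGraph (Fin n)}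

theorem isStable_iff_isIndepSet {I : Finset (Fin n)} :
    IsStable G I ↔ G.IsIndepSet (I : Set (Fin n)) :=
  ⟨fun h _ ha _ hb _ => h ha hb, fun h _ ha _ hb hab => h ha hb (G.ne_of_adj hab) hab⟩

theorem isStable_compl_iff_isClique {I : Finset (Fin n)} :
    IsStable Gᶜ I ↔ G.IsClique (I : Set (Fin n)) := by
  rw [isStable_iff_isIndepSet, SimpleGraph.isIndepSet_compl]

theorem hansenVert_eq_cons (I : Finset (Fin n)) :
    hansenVert I = Fin.cons 1 ((I : Set (Fin n)).indicator 1) := by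
  classical
  ext j
  cases j using Fin.cases <;> simp [hansenVert, Set.indicator_apply]

theorem dotProduct_hansenVert (y : Fin (n + 1) → ℝ) (I : Finset (Fin n)) :
    y ⬝ᵥ hansenVert I = y 0 + ∑ i ∈ I, y i.succ := by
  rw [hansenVert_eq_cons, dotProduct, Fin.sum_univ_succ]
  simp [SimpleGraph.sum_mul_indicator_one (fun i : Fin n => y i.succ)]

theorem mem_polarDual_hansenPolytope {y : Fin (n + 1) → ℝ} :
    y ∈ polarDual (hansenPolytope G) ↔
      ∀ I : Finset (Fin n), IsStable G I → |y 0 + ∑ i ∈ I, y i.succ| ≤ 1 := by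
  rw [hansenPolytope, polarDual_convexHull]
  refine ⟨fun hy I hI => abs_le.2 ⟨?_, ?_⟩, ?_⟩
  · have : y ⬝ᵥ -hansenVert I ≤ 1 := hy _ ⟨I, hI, Or.inr rfl⟩
    rw [dotProduct_neg, dotProduct_hansenVert] at this
    linarith
  · have : y ⬝ᵥ hansenVert I ≤ 1 := hy _ ⟨I, hI, Or.inl rfl⟩
    rwa [dotProduct_hansenVert] at this
  · rintro h x ⟨I, hI, rfl | rfl⟩
    · show y ⬝ᵥ hansenVert I ≤ 1
      rw [dotProduct_hansenVert]
      exact (abs_le.1 (h I hI)).2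
    · show y ⬝ᵥ -hansenVert I ≤ 1
      rw [dotProduct_neg, dotProduct_hansenVert]
      linarith [(abs_le.1 (h I hI)).1]

theorem neg_mem_polarDual_hansenPolytope {y : Fin (n + 1) → ℝ}
    (hy : y ∈ polarDual (hansenPolytope G)) : -y ∈ polarDual (hansenPolytope G) := by
  rw [mem_polarDual_hansenPolytope] at hy ⊢
  intro I hI
  simp only [Pi.neg_apply, sum_neg_distrib, ← neg_add, abs_neg]
  exact hy I hI

theorem neg_mem_hansenPolytope {x : Fin (n + 1) → ℝ} (hx : x ∈ hansenPolytope G) :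
    -x ∈ hansenPolytope G := by
  rw [hansenPolytope, ← Set.mem_neg, ← convexHull_neg]
  refine convexHull_mono ?_ hx
  rintro _ ⟨I, hI, rfl | rfl⟩
  · exact ⟨I, hI, Or.inr rfl⟩
  · exact ⟨I, hI, Or.inl (neg_neg _)⟩

theorem cons_one_mem_hansenPolytope_compl {a : Fin n → ℝ} (ha : a ∈ G.cliquePolytope) :
    Fin.cons 1 a ∈ hansenPolytope Gᶜ := by
  refine convexHull_min (t := {u | Fin.cons 1 u ∈ hansenPolytope Gᶜ}) ?_ ?_ ha
  · rintro _ ⟨K, hK, rfl⟩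
    exact subset_convexHull ℝ _
      ⟨K, isStable_compl_iff_isClique.2 hK, Or.inl (hansenVert_eq_cons K).symm⟩
  · intro u hu v hv s t hs ht hst
    have hcons : (Fin.cons 1 (s • u + t • v) : Fin (n + 1) → ℝ) =
        s • Fin.cons 1 u + t • Fin.cons 1 v := by
      ext j
      cases j using Fin.cases <;> simp [hst]
    show (Fin.cons 1 (s • u + t • v) : Fin (n + 1) → ℝ) ∈ hansenPolytope Gᶜ
    rw [hcons]
    exact convex_convexHull ℝ _ hu hv hs ht hst

/-- The map `D : x ↦ (-x₀, 2x₁, …, 2xₙ)`. -/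
noncomputable def hansenScaling (n : ℕ) : (Fin (n + 1) → ℝ) ≃ₗ[ℝ] (Fin (n + 1) → ℝ) :=
  LinearEquiv.piCongrRight fun j =>
    LinearEquiv.smulOfNeZero ℝ ℝ ((Fin.cons (-1) fun _ => 2 : Fin (n + 1) → ℝ) j)
      (by cases j using Fin.cases <;> norm_num)

@[simp] theorem hansenScaling_apply_zero (x : Fin (n + 1) → ℝ) :
    hansenScaling n x 0 = -x 0 := by
  simp [hansenScaling]

@[simp] theorem hansenScaling_apply_succ (x : Fin (n + 1) → ℝ) (i : Fin n) :
    hansenScaling n x i.succ = 2 * x i.succ := by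
  simp [hansenScaling]

theorem hansenScaling_hansenVert_mem_polarDual {K : Finset (Fin n)}
    (hK : G.IsClique (K : Set (Fin n))) :
    hansenScaling n (hansenVert K) ∈ polarDual (hansenPolytope G) := by
  classical
  refine mem_polarDual_hansenPolytope.2 fun I hI => ?_
  -- the pairing is `-1 + 2 #(I ∩ K)`, and a stable set meets a clique at most once
  have hcard := (isStable_iff_isIndepSet.1 hI).card_inter_le_one hK
  have hsum : ∑ i ∈ I, hansenScaling n (hansenVert K) i.succ = 2 * #(I ∩ K) := by
    simp [hansenVert, mul_comm]
  have hcard' : (#(I ∩ K) : ℝ) ≤ 1 := by exact_mod_cast hcard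
  rw [hsum, hansenScaling_apply_zero, abs_le]
  simp only [hansenVert, Fin.cases_zero]
  constructor <;> linarith [(#(I ∩ K)).cast_nonneg (α := ℝ)]

theorem image_hansenPolytope_compl_subset_polarDual :
    hansenScaling n '' hansenPolytope Gᶜ ⊆ polarDual (hansenPolytope G) := by
  rw [hansenPolytope, ← LinearEquiv.coe_toLinearMap, LinearMap.image_convexHull]
  refine convexHull_min ?_ (convex_polarDual _)
  rintro _ ⟨x, ⟨K, hK, rfl | rfl⟩, rfl⟩
  · exact hansenScaling_hansenVert_mem_polarDual (isStable_compl_iff_isClique.1 hK)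
  · rw [LinearEquiv.coe_toLinearMap, map_neg]
    exact neg_mem_polarDual_hansenPolytope
      (hansenScaling_hansenVert_mem_polarDual (isStable_compl_iff_isClique.1 hK))

theorem polarDual_hansenPolytope_subset_image
    (hG : ∀ S : Finset (Fin n), G.ColorableOn S (G.cliqueNumOn S)) :
    polarDual (hansenPolytope G) ⊆ hansenScaling n '' hansenPolytope Gᶜ := by
  intro y hy
  set w : Fin n → ℝ := fun i => y i.succ
  have hw : ∀ S : Finset (Fin n), G.IsIndepSet (S : Set (Fin n)) →
      |y 0 + ∑ i ∈ S, w i| ≤ 1 :=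
    fun S hS => mem_polarDual_hansenPolytope.1 hy S (isStable_iff_isIndepSet.2 hS)
  obtain ⟨a, ha, hwa⟩ := SimpleGraph.exists_eq_smul_mem_cliquePolytope hG (posPart_nonneg w)
    (r := 1 - y 0) fun S hS => hS.sum_posPart_le fun S hS => by
      linarith [(abs_le.1 (hw S hS)).2]
  obtain ⟨b, hb, hwb⟩ := SimpleGraph.exists_eq_smul_mem_cliquePolytope hG (negPart_nonneg w)
    (r := 1 + y 0) fun S hS => by
      simpa [← posPart_neg] using hS.sum_posPart_le (w := -w) fun S hS => by
        simp only [Pi.neg_apply, sum_neg_distrib]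
        linarith [(abs_le.1 (hw S hS)).1]
  have hy0 := abs_le.1 (by simpa using hw ∅ (by simp))
  -- `D⁻¹ y = t (1, a) - (1 - t) (1, b)`, because `w = w⁺ - w⁻ = (1 - y₀) a - (1 + y₀) b`
  set t := (1 - y 0) / 2 with ht
  refine ⟨t • Fin.cons 1 a + (1 - t) • -Fin.cons 1 b,
    convex_convexHull ℝ _ (cons_one_mem_hansenPolytope_compl ha)
      (neg_mem_hansenPolytope (cons_one_mem_hansenPolytope_compl hb))
      (by linarith) (by linarith) (by ring), ?_⟩
  ext j
  cases j using Fin.cases with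
  | zero =>
    simp only [hansenScaling_apply_zero, Pi.add_apply, Pi.smul_apply, Pi.neg_apply, Fin.cons_zero,
      smul_eq_mul, t]
    ring
  | succ i =>
    have hpos := congrFun hwa i
    have hneg := congrFun hwb i
    have hdecomp := congrFun (posPart_sub_negPart w) i
    simp only [Pi.smul_apply, Pi.sub_apply, smul_eq_mul] at hpos hneg hdecomp
    simp only [hansenScaling_apply_succ, Pi.add_apply, Pi.smul_apply, Pi.neg_apply, Fin.cons_succ,
      smul_eq_mul, t]
    linear_combination -hpos + hneg + hdecomp

end Hansen

theorem hansen_polar_dual {n : ℕ} (G : SimpleGraph (Fin n)) (hG : IsPerfect G) :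
    ∃ f : (Fin (n + 1) → ℝ) ≃ᵃ[ℝ] (Fin (n + 1) → ℝ),
      f '' hansenPolytope Gᶜ = polarDual (hansenPolytope G) :=
  ⟨(hansenScaling n).toAffineEquiv, image_hansenPolytope_compl_subset_polarDual.antisymm
    (polarDual_hansenPolytope_subset_image hG.colorableOn)⟩
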